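/- arXiv:2109.01345 — 4 statements merged into one kernel-verified Lean document; each statement's English description precedes it below -/
import Mathlib

section
/- Let ρ be a d×d density matrix and let Φ₁,…,Φ_N (N ≥ 3) be quantum channels on d×d matrices, where Φ_s has Kraus operators K₁ˢ,…,K_nˢ. Then for any permutations π₁,…,π_N of {1,…,n}, ∑_{s=1}^{N} I_ρ(Φ_s) ≥ (1/(N−2)) { ∑_{1≤s<t≤N} ∑_{i=1}^{n} I_ρ(K^s_{π_s(i)} + K^t_{π_t(i)}) − (1/(N−1)²) [ ∑_{1≤s<t≤N} √( ∑_{i=1}^{n} I_ρ(K^s_{π_s(i)} + K^t_{π_t(i)}) ) ]² }. -/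
open Matrix Finset
open scoped ComplexOrder

/-- The positive semidefinite square root of a positive semidefinite matrix, as defined in
Mathlib (Dec 2024) under the name `Matrix.PosSemidef.sqrt` (since removed). -/
noncomputable def Matrix.PosSemidef.sqrt {n : Type*} [Fintype n] [DecidableEq n]
    {𝕜 : Type*} [RCLike 𝕜] {A : Matrix n n 𝕜} (hA : A.PosSemidef) : Matrix n n 𝕜 :=
  hA.1.eigenvectorUnitary.1 * diagonal ((↑) ∘ (√·) ∘ hA.1.eigenvalues) *
    (star hA.1.eigenvectorUnitary : Matrix n n 𝕜)

/-- Wigner–Yanase skew information `I_ρ(A) = (1/2) Tr([√ρ, A]† [√ρ, A])` of a matrix `A`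
with respect to a positive semidefinite matrix `ρ`, where `√ρ = hρ.sqrt` is the positive
semidefinite square root of `ρ`. -/
noncomputable def skewInfo {d : ℕ} {ρ : Matrix (Fin d) (Fin d) ℂ} (hρ : ρ.PosSemidef)
    (A : Matrix (Fin d) (Fin d) ℂ) : ℝ :=
  (1 / 2 : ℝ) *
    (((hρ.sqrt * A - A * hρ.sqrt)ᴴ * (hρ.sqrt * A - A * hρ.sqrt)).trace).re

/-!
Write `I_ρ(A) = ‖v(A)‖²`, where `v(A)` is the vectorised commutator `[√ρ, A] / √2`, and stack the
vectors `v(K^s_{π_s(i)})`, `i = 1, …, n`, into a single vector `u_s`. Since `v` is additive, the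
three sums in the theorem become `∑ ‖u_s‖²`, `∑_{s<t} ‖u_s + u_t‖²` and `∑_{s<t} ‖u_s + u_t‖`,
and the claim is a statement about `N` vectors in an inner product space. There
`∑_{s<t} ‖u_s + u_t‖² = (N - 2) ∑ ‖u_s‖² + ‖∑ u_s‖²`, while the triangle inequality applied to
`∑_{s<t} (u_s + u_t) = (N - 1) ∑ u_s` gives `(N - 1) ‖∑ u_s‖ ≤ ∑_{s<t} ‖u_s + u_t‖`.
-/

open scoped InnerProductSpace

theorem sum_compl_singleton_add {ι E : Type*} [Fintype ι] [DecidableEq ι] [AddCommGroup E]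
    [Module ℝ E] (u : ι → E) (s : ι) :
    ∑ t ∈ {s}ᶜ, (u s + u t) = ((Fintype.card ι : ℝ) - 2) • u s + ∑ t, u t := by
  rw [sum_add_distrib, sum_const, ← sum_compl_add_sum {s}, sum_singleton, card_compl,
    card_singleton, ← Nat.cast_smul_eq_nsmul ℝ]
  push_cast [Nat.cast_sub (Fintype.card_pos_iff.mpr ⟨s⟩)]
  module

section PairSums

variable {ι : Type*} [Fintype ι] [LinearOrder ι] [LocallyFiniteOrderTop ι]
  [LocallyFiniteOrderBot ι]

theorem sum_sum_Ioi_add_eq_card_sub_one_smul {M : Type*} [AddCommMonoid M] (u : ι → M) :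
    ∑ s, ∑ t ∈ Ioi s, (u s + u t) = (Fintype.card ι - 1) • ∑ s, u s := by
  rw [sum_sum_Ioi_add_eq_sum_sum_off_diag (fun _ s ↦ u s), smul_sum]
  simp [card_compl]

variable {E : Type*} [NormedAddCommGroup E] [InnerProductSpace ℝ E]

theorem sum_sum_Ioi_norm_add_sq (u : ι → E) :
    ∑ s, ∑ t ∈ Ioi s, ‖u s + u t‖ ^ 2 =
      ((Fintype.card ι : ℝ) - 2) * ∑ s, ‖u s‖ ^ 2 + ‖∑ s, u s‖ ^ 2 := by
  -- Both halves pair `u s` with `u s + u t`, so the off-diagonal sum leaves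
  -- `∑ s, ⟪u s, ∑ t ∈ {s}ᶜ, (u s + u t)⟫`.
  have hsplit (a b : E) : ‖a + b‖ ^ 2 = ⟪a, a + b⟫_ℝ + ⟪b, b + a⟫_ℝ := by
    rw [add_comm b a, ← inner_add_left, real_inner_self_eq_norm_sq]
  simp_rw [hsplit]
  rw [sum_sum_Ioi_add_eq_sum_sum_off_diag (fun t s ↦ ⟪u s, u s + u t⟫_ℝ)]
  simp_rw [← inner_sum, sum_compl_singleton_add, inner_add_right, real_inner_smul_right,
    sum_add_distrib, ← sum_inner, real_inner_self_eq_norm_sq, mul_sum]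

theorem card_sub_one_mul_norm_sum_le (u : ι → E) :
    ((Fintype.card ι : ℝ) - 1) * ‖∑ s, u s‖ ≤ ∑ s, ∑ t ∈ Ioi s, ‖u s + u t‖ := calc
  ((Fintype.card ι : ℝ) - 1) * ‖∑ s, u s‖ ≤ ((Fintype.card ι - 1 : ℕ) : ℝ) * ‖∑ s, u s‖ := by
    gcongr
    rw [sub_le_iff_le_add]
    exact_mod_cast le_tsub_add
  _ = ‖∑ s, ∑ t ∈ Ioi s, (u s + u t)‖ := by
    rw [sum_sum_Ioi_add_eq_card_sub_one_smul, RCLike.norm_nsmul ℝ, nsmul_eq_mul]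
  _ ≤ ∑ s, ∑ t ∈ Ioi s, ‖u s + u t‖ :=
    (norm_sum_le _ _).trans (sum_le_sum fun s _ ↦ norm_sum_le _ _)

theorem sum_sum_Ioi_norm_add_sq_sub_le (hι : 2 ≤ Fintype.card ι) (u : ι → E) :
    ∑ s, ∑ t ∈ Ioi s, ‖u s + u t‖ ^ 2 -
        (∑ s, ∑ t ∈ Ioi s, ‖u s + u t‖) ^ 2 / ((Fintype.card ι : ℝ) - 1) ^ 2 ≤
      ((Fintype.card ι : ℝ) - 2) * ∑ s, ‖u s‖ ^ 2 := by
  have hN : (0 : ℝ) < (Fintype.card ι : ℝ) - 1 := by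
    have : (2 : ℝ) ≤ Fintype.card ι := by exact_mod_cast hι
    linarith
  have hM : ‖∑ s, u s‖ ^ 2 ≤
      (∑ s, ∑ t ∈ Ioi s, ‖u s + u t‖) ^ 2 / ((Fintype.card ι : ℝ) - 1) ^ 2 := by
    rw [le_div_iff₀ (by positivity), ← mul_pow, mul_comm]
    exact pow_le_pow_left₀ (by positivity) (card_sub_one_mul_norm_sum_le u) 2
  rw [sum_sum_Ioi_norm_add_sq]
  linarith

end PairSums

theorem Matrix.norm_toLp_vec_sq {m n 𝕜 : Type*} [Fintype m] [Fintype n] [RCLike 𝕜]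
    (C : Matrix m n 𝕜) : ‖WithLp.toLp 2 C.vec‖ ^ 2 = RCLike.re (Cᴴ * C).trace := by
  rw [← star_vec_dotProduct_vec, norm_sq_eq_re_inner (𝕜 := 𝕜), EuclideanSpace.inner_toLp_toLp,
    dotProduct_comm]

section SkewInformation

variable {d : ℕ} {ρ : Matrix (Fin d) (Fin d) ℂ} (hρ : ρ.PosSemidef)

noncomputable def skewVec (A : Matrix (Fin d) (Fin d) ℂ) : EuclideanSpace ℂ (Fin d × Fin d) :=
  (√2)⁻¹ • WithLp.toLp 2 (hρ.sqrt * A - A * hρ.sqrt).vec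

theorem skewInfo_eq_norm_skewVec_sq (A : Matrix (Fin d) (Fin d) ℂ) :
    skewInfo hρ A = ‖skewVec hρ A‖ ^ 2 := by
  rw [skewInfo, skewVec, norm_smul, mul_pow, Matrix.norm_toLp_vec_sq, norm_inv,
    Real.norm_of_nonneg (Real.sqrt_nonneg 2), inv_pow, Real.sq_sqrt zero_le_two, one_div]
  rfl

theorem skewVec_add (A B : Matrix (Fin d) (Fin d) ℂ) :
    skewVec hρ (A + B) = skewVec hρ A + skewVec hρ B := by
  rw [skewVec, skewVec, skewVec, ← smul_add, ← WithLp.toLp_add, ← vec_add]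
  congr 3
  noncomm_ring

theorem sum_skewInfo_eq_norm_sq {ι : Type*} [Fintype ι] (A : ι → Matrix (Fin d) (Fin d) ℂ) :
    ∑ i, skewInfo hρ (A i) =
      ‖(WithLp.toLp 2 fun i ↦ skewVec hρ (A i) :
        PiLp 2 fun _ : ι ↦ EuclideanSpace ℂ (Fin d × Fin d))‖ ^ 2 := by
  rw [PiLp.norm_sq_eq_of_L2]
  simp_rw [skewInfo_eq_norm_skewVec_sq]

end SkewInformation

theorem stmt_0_general {d n N : ℕ} (hN : 3 ≤ N)
    (ρ : Matrix (Fin d) (Fin d) ℂ) (hρ : ρ.PosSemidef)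
    (K : Fin N → Fin n → Matrix (Fin d) (Fin d) ℂ)
    (π : Fin N → Equiv.Perm (Fin n)) :
    ∑ s, ∑ i, skewInfo hρ (K s i) ≥
      (1 / ((N : ℝ) - 2)) *
        ((∑ s : Fin N, ∑ t ∈ Finset.Ioi s, ∑ i, skewInfo hρ (K s (π s i) + K t (π t i)))
          - (1 / ((N : ℝ) - 1) ^ 2) *
            (∑ s : Fin N, ∑ t ∈ Finset.Ioi s,
              Real.sqrt (∑ i, skewInfo hρ (K s (π s i) + K t (π t i)))) ^ 2) := by
  let u : Fin N → PiLp 2 fun _ : Fin n ↦ EuclideanSpace ℂ (Fin d × Fin d) :=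
    fun s ↦ WithLp.toLp 2 fun i ↦ skewVec hρ (K s (π s i))
  have hchannel (s : Fin N) : ∑ i, skewInfo hρ (K s i) = ‖u s‖ ^ 2 := by
    rw [← Equiv.sum_comp (π s), sum_skewInfo_eq_norm_sq]
  have hpair (s t : Fin N) :
      ∑ i, skewInfo hρ (K s (π s i) + K t (π t i)) = ‖u s + u t‖ ^ 2 := by
    simp_rw [sum_skewInfo_eq_norm_sq, skewVec_add]
    rfl
  have hN2 : (0 : ℝ) < N - 2 := by
    have : (3 : ℝ) ≤ N := by exact_mod_cast hN
    linarith
  simp_rw [hchannel, hpair, Real.sqrt_sq (norm_nonneg _)]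
  rw [ge_iff_le, one_div_mul_eq_div, div_le_iff₀ hN2, one_div_mul_eq_div]
  simpa [mul_comm] using sum_sum_Ioi_norm_add_sq_sub_le (by simp; omega) u

theorem stmt_0 {d n N : ℕ} (hN : 3 ≤ N)
    (ρ : Matrix (Fin d) (Fin d) ℂ) (hρ : ρ.PosSemidef) (htr : ρ.trace = 1)
    (K : Fin N → Fin n → Matrix (Fin d) (Fin d) ℂ)
    (hK : ∀ s, ∑ i, (K s i)ᴴ * K s i = 1)
    (π : Fin N → Equiv.Perm (Fin n)) :
    ∑ s, ∑ i, skewInfo hρ (K s i) ≥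
      (1 / ((N : ℝ) - 2)) *
        ((∑ s : Fin N, ∑ t ∈ Finset.Ioi s, ∑ i, skewInfo hρ (K s (π s i) + K t (π t i)))
          - (1 / ((N : ℝ) - 1) ^ 2) *
            (∑ s : Fin N, ∑ t ∈ Finset.Ioi s,
              Real.sqrt (∑ i, skewInfo hρ (K s (π s i) + K t (π t i)))) ^ 2) :=
  stmt_0_general hN ρ hρ K π
end

section
/- Let a₁,…,a_N (N ≥ 2) be vectors in a complex inner product space. Then ∑_{s=1}^{N} ‖a_s‖² ≥ (1/N) [ ‖∑_{s=1}^{N} a_s‖² + (2/(N(N−1))) ( ∑_{1≤s<t≤N} ‖a_s − a_t‖ )² ]. -/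
/-!
Lagrange's identity `N ∑ ‖a s‖² = ‖∑ a s‖² + ∑_{s<t} ‖a s - a t‖²` reduces the claim to
Cauchy–Schwarz over the `N(N-1)/2` pairs `s < t`:
`(∑_{s<t} ‖a s - a t‖)² ≤ N(N-1)/2 · ∑_{s<t} ‖a s - a t‖²`.
-/

open Finset

section PairSums

variable {ι : Type*} [Fintype ι] [LinearOrder ι] [LocallyFiniteOrderTop ι]

theorem sum_sum_Ioi_eq_sum_filter_lt {M : Type*} [AddCommMonoid M] (f : ι → ι → M) :
    ∑ s, ∑ t ∈ Ioi s, f s t = ∑ x ∈ univ ×ˢ univ with x.1 < x.2, f x.1 x.2 := by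
  rw [sum_filter, sum_product]
  simp_rw [← sum_filter, filter_lt_eq_Ioi]

theorem sq_sum_sum_Ioi_le_choose_two_mul (f : ι → ι → ℝ) :
    (∑ s, ∑ t ∈ Ioi s, f s t) ^ 2
      ≤ (Fintype.card ι).choose 2 * ∑ s, ∑ t ∈ Ioi s, f s t ^ 2 := by
  simp_rw [sum_sum_Ioi_eq_sum_filter_lt]
  rw [← card_univ, ← card_product_filter_lt]
  exact sq_sum_le_card_mul_sum_sq

theorem two_nsmul_sum_sum_Ioi_of_symm [LocallyFiniteOrderBot ι] {M : Type*} [AddCommMonoid M]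
    {f : ι → ι → M} (symm : ∀ s t, f s t = f t s) (diag : ∀ s, f s s = 0) :
    2 • ∑ s, ∑ t ∈ Ioi s, f s t = ∑ s, ∑ t, f s t := by
  calc 2 • ∑ s, ∑ t ∈ Ioi s, f s t = ∑ s, ∑ t ∈ Ioi s, (f t s + f s t) := by
        rw [two_nsmul, ← sum_add_distrib]
        refine sum_congr rfl fun s _ => ?_
        rw [← sum_add_distrib]
        exact sum_congr rfl fun t _ => by rw [symm]
    _ = ∑ s, ∑ t ∈ {s}ᶜ, f t s := sum_sum_Ioi_add_eq_sum_sum_off_diag f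
    _ = ∑ t, ∑ s, f s t := by
        refine sum_congr rfl fun s _ => ?_
        rw [← sum_compl_add_sum {s}, sum_singleton, diag, add_zero]
    _ = ∑ s, ∑ t, f s t := sum_comm

end PairSums

section Lagrange

variable {E ι : Type*} [NormedAddCommGroup E] [Fintype ι]

theorem sum_sum_norm_sub_sq (𝕜 : Type*) [RCLike 𝕜] [InnerProductSpace 𝕜 E] (a : ι → E) :
    ∑ s, ∑ t, ‖a s - a t‖ ^ 2 = 2 * (Fintype.card ι * ∑ s, ‖a s‖ ^ 2 - ‖∑ s, a s‖ ^ 2) := by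
  have norm_sum_sq : ‖∑ s, a s‖ ^ 2 = ∑ s, ∑ t, RCLike.re (inner 𝕜 (a s) (a t)) := by
    rw [@norm_sq_eq_re_inner 𝕜, sum_inner, map_sum]
    simp_rw [inner_sum, map_sum]
  simp_rw [@norm_sub_sq 𝕜, sum_add_distrib, sum_sub_distrib, sum_const, card_univ, ← mul_sum,
    norm_sum_sq, nsmul_eq_mul]
  rw [← mul_sum]
  ring

theorem card_mul_sum_norm_sq_eq_norm_sum_sq_add (𝕜 : Type*) [RCLike 𝕜] [InnerProductSpace 𝕜 E]
    [LinearOrder ι] [LocallyFiniteOrderTop ι] [LocallyFiniteOrderBot ι] (a : ι → E) :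
    Fintype.card ι * ∑ s, ‖a s‖ ^ 2 = ‖∑ s, a s‖ ^ 2 + ∑ s, ∑ t ∈ Ioi s, ‖a s - a t‖ ^ 2 := by
  have pairs := two_nsmul_sum_sum_Ioi_of_symm (f := fun s t => ‖a s - a t‖ ^ 2)
    (fun s t => by rw [norm_sub_rev]) (fun s => by simp)
  rw [sum_sum_norm_sub_sq 𝕜, two_nsmul] at pairs
  linarith

end Lagrange

theorem stmt_17_general {E : Type*} [NormedAddCommGroup E] [InnerProductSpace ℂ E]
    {N : ℕ} (a : Fin N → E) :
    ∑ s, ‖a s‖ ^ 2 ≥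
      (1 / (N : ℝ)) *
        (‖∑ s, a s‖ ^ 2
          + (2 / ((N : ℝ) * ((N : ℝ) - 1))) *
            (∑ s : Fin N, ∑ t ∈ Finset.Ioi s, ‖a s - a t‖) ^ 2) := by
  have lagrange := card_mul_sum_norm_sq_eq_norm_sum_sq_add ℂ a
  have cauchy_schwarz := sq_sum_sum_Ioi_le_choose_two_mul fun s t => ‖a s - a t‖
  rw [Fintype.card_fin] at lagrange cauchy_schwarz
  have pairs_bound : (2 / ((N : ℝ) * ((N : ℝ) - 1))) * (∑ s : Fin N, ∑ t ∈ Ioi s, ‖a s - a t‖) ^ 2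
      ≤ ∑ s : Fin N, ∑ t ∈ Ioi s, ‖a s - a t‖ ^ 2 := by
    rw [show 2 / ((N : ℝ) * ((N : ℝ) - 1)) = 1 / (N.choose 2 : ℝ) by
      rw [Nat.cast_choose_two, one_div_div], one_div_mul_eq_div]
    exact div_le_of_le_mul₀ (by positivity) (by positivity) (by linarith)
  rw [ge_iff_le, one_div_mul_eq_div]
  exact div_le_of_le_mul₀ N.cast_nonneg (by positivity) (by linarith)

theorem stmt_17 {E : Type*} [NormedAddCommGroup E] [InnerProductSpace ℂ E]
    {N : ℕ} (hN : 2 ≤ N) (a : Fin N → E) :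
    ∑ s, ‖a s‖ ^ 2 ≥
      (1 / (N : ℝ)) *
        (‖∑ s, a s‖ ^ 2
          + (2 / ((N : ℝ) * ((N : ℝ) - 1))) *
            (∑ s : Fin N, ∑ t ∈ Finset.Ioi s, ‖a s - a t‖) ^ 2) :=
  stmt_17_general a
end

section
/- Let a₁,…,a_N (N ≥ 2) be vectors in a complex inner product space. Then ∑_{s=1}^{N} ‖a_s‖² ≥ (1/(2N−2)) [ ∑_{1≤s<t≤N} ‖a_s + a_t‖² + (2/(N(N−1))) ( ∑_{1≤s<t≤N} ‖a_s − a_t‖ )² ]. -/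
/-! Summing the parallelogram law over all pairs `s < t` gives
`∑ ‖a s + a t‖² + ∑ ‖a s - a t‖² = 2 (N - 1) ∑ ‖a s‖²`, and Cauchy–Schwarz over the
`N (N - 1) / 2` pairs bounds `(∑ ‖a s - a t‖)²` by `N (N - 1) / 2 · ∑ ‖a s - a t‖²`. -/

open Finset

section Pairs

variable {α : Type*} [LinearOrder α] [Fintype α] [LocallyFiniteOrderTop α]
  [LocallyFiniteOrderBot α]

theorem sum_sum_Ioi_add_eq {R : Type*} [CommRing R] (f : α → R) :
    ∑ i, ∑ j ∈ Ioi i, (f i + f j) = (Fintype.card α - 1) * ∑ i, f i := by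
  rcases isEmpty_or_nonempty α with hα | hα
  · simp
  rw [sum_sum_Ioi_add_eq_sum_sum_off_diag fun _ j => f j]
  simp only [sum_const, card_compl, card_singleton, nsmul_eq_mul, ← mul_sum]
  rw [Nat.cast_sub Fintype.card_pos, Nat.cast_one]

theorem two_mul_card_sigma_Ioi {R : Type*} [CommRing R] :
    (2 : R) * #(univ.sigma fun i : α => Ioi i) =
      Fintype.card α * (Fintype.card α - 1) := by
  have h := sum_sum_Ioi_add_eq (α := α) fun _ => (1 : R)
  simp only [sum_const, card_univ, nsmul_eq_mul, mul_one] at h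
  rw [card_sigma, Nat.cast_sum, mul_sum, mul_comm _ (_ - 1), ← h]
  simp only [one_add_one_eq_two, mul_comm]

theorem two_mul_sq_sum_sum_Ioi_le (g : α → α → ℝ) :
    2 * (∑ i, ∑ j ∈ Ioi i, g i j) ^ 2 ≤
      Fintype.card α * (Fintype.card α - 1) * ∑ i, ∑ j ∈ Ioi i, g i j ^ 2 := by
  have h := sq_sum_le_card_mul_sum_sq (s := univ.sigma fun i : α => Ioi i)
    (f := fun p => g p.1 p.2)
  rw [sum_sigma, sum_sigma] at h
  rw [← two_mul_card_sigma_Ioi]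
  linarith

theorem sum_sum_Ioi_norm_add_sq_add_norm_sub_sq (𝕜 : Type*) {E : Type*} [RCLike 𝕜]
    [NormedAddCommGroup E] [InnerProductSpace 𝕜 E] (a : α → E) :
    ∑ i, ∑ j ∈ Ioi i, ‖a i + a j‖ ^ 2 + ∑ i, ∑ j ∈ Ioi i, ‖a i - a j‖ ^ 2 =
      2 * (Fintype.card α - 1) * ∑ i, ‖a i‖ ^ 2 := by
  simp only [← sum_add_distrib]
  have h := sum_sum_Ioi_add_eq fun i => 2 * ‖a i‖ ^ 2
  rw [← mul_sum] at h
  rw [mul_assoc, mul_left_comm, ← h]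
  refine sum_congr rfl fun i _ => sum_congr rfl fun j _ => ?_
  have := parallelogram_law_with_norm 𝕜 (a i) (a j)
  linarith

end Pairs

theorem stmt_18 {E : Type*} [NormedAddCommGroup E] [InnerProductSpace ℂ E]
    {N : ℕ} (hN : 2 ≤ N) (a : Fin N → E) :
    ∑ s, ‖a s‖ ^ 2 ≥
      (1 / (2 * (N : ℝ) - 2)) *
        ((∑ s : Fin N, ∑ t ∈ Finset.Ioi s, ‖a s + a t‖ ^ 2)
          + (2 / ((N : ℝ) * ((N : ℝ) - 1))) *
            (∑ s : Fin N, ∑ t ∈ Finset.Ioi s, ‖a s - a t‖) ^ 2) := by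
  have hN2 : (2 : ℝ) ≤ N := by exact_mod_cast hN
  have hN1 : (0 : ℝ) < N - 1 := by linarith
  have hpar := sum_sum_Ioi_norm_add_sq_add_norm_sub_sq ℂ a
  have hCS := two_mul_sq_sum_sum_Ioi_le fun s t : Fin N => ‖a s - a t‖
  rw [Fintype.card_fin] at hpar hCS
  have hdiff : 2 / (N * (N - 1)) * (∑ s : Fin N, ∑ t ∈ Ioi s, ‖a s - a t‖) ^ 2 ≤
      ∑ s : Fin N, ∑ t ∈ Ioi s, ‖a s - a t‖ ^ 2 := by
    rw [div_mul_eq_mul_div, div_le_iff₀ (by positivity)]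
    linarith
  calc _ ≤ 1 / (2 * (N : ℝ) - 2) *
        (∑ s : Fin N, ∑ t ∈ Ioi s, ‖a s + a t‖ ^ 2 +
          ∑ s : Fin N, ∑ t ∈ Ioi s, ‖a s - a t‖ ^ 2) := by
        exact mul_le_mul_of_nonneg_left (by linarith) (one_div_pos.2 (by linarith)).le
    _ = ∑ s, ‖a s‖ ^ 2 := by
        rw [hpar]
        field_simp
end

section
/- Let a₁,…,a_N (N ≥ 2) be vectors in a complex inner product space. Then ∑_{s=1}^{N} ‖a_s‖² ≥ (1/(2N−2)) [ ∑_{1≤s<t≤N} ‖a_s − a_t‖² + (2/(N(N−1))) ( ∑_{1≤s<t≤N} ‖a_s + a_t‖ )² ]. -/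
open Finset

lemma sum_lt_pairs {N : ℕ} (f : Fin N → Fin N → ℝ) :
    ∑ p ∈ (univ ×ˢ univ : Finset (Fin N × Fin N)).filter (fun p => p.1 < p.2), f p.1 p.2
      = ∑ i, ∑ j ∈ Ioi i, f i j := by
  rw [Finset.sum_filter, Finset.sum_product]
  refine Finset.sum_congr rfl fun i _ => ?_
  rw [← Finset.sum_filter]
  refine Finset.sum_congr ?_ fun _ _ => rfl
  ext j
  simp

lemma sum_offDiag_pairs {N : ℕ} (f : Fin N → Fin N → ℝ) (hsym : ∀ i j, f i j = f j i) :
    ∑ p ∈ (univ : Finset (Fin N)).offDiag, f p.1 p.2 = 2 * ∑ i, ∑ j ∈ Ioi i, f i j := by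
  have hsplit : (univ : Finset (Fin N)).offDiag
      = (univ ×ˢ univ : Finset (Fin N × Fin N)).filter (fun p => p.1 < p.2)
        ∪ (univ ×ˢ univ : Finset (Fin N × Fin N)).filter (fun p => p.2 < p.1) := by
    ext p
    simp only [Finset.mem_offDiag, Finset.mem_union, Finset.mem_filter, Finset.mem_product,
      Finset.mem_univ, true_and]
    exact ne_iff_lt_or_gt
  have hdisj : Disjoint
      ((univ ×ˢ univ : Finset (Fin N × Fin N)).filter (fun p => p.1 < p.2))
      ((univ ×ˢ univ : Finset (Fin N × Fin N)).filter (fun p => p.2 < p.1)) := by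
    rw [Finset.disjoint_left]
    intro p hp hp'
    simp only [Finset.mem_filter] at hp hp'
    exact absurd hp'.2 (not_lt.2 hp.2.le)
  have hswap : ∑ p ∈ (univ ×ˢ univ : Finset (Fin N × Fin N)).filter (fun p => p.2 < p.1),
      f p.1 p.2
      = ∑ p ∈ (univ ×ˢ univ : Finset (Fin N × Fin N)).filter (fun p => p.1 < p.2),
        f p.1 p.2 := by
    refine Finset.sum_nbij' (fun p => p.swap) (fun p => p.swap) ?_ ?_ ?_ ?_ ?_ <;>
      simp [hsym]
  rw [hsplit, Finset.sum_union hdisj, hswap, sum_lt_pairs, two_mul]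

theorem stmt_19 {E : Type*} [NormedAddCommGroup E] [InnerProductSpace ℂ E]
    {N : ℕ} (hN : 2 ≤ N) (a : Fin N → E) :
    ∑ s, ‖a s‖ ^ 2 ≥
      (1 / (2 * (N : ℝ) - 2)) *
        ((∑ s : Fin N, ∑ t ∈ Finset.Ioi s, ‖a s - a t‖ ^ 2)
          + (2 / ((N : ℝ) * ((N : ℝ) - 1))) *
            (∑ s : Fin N, ∑ t ∈ Finset.Ioi s, ‖a s + a t‖) ^ 2) := by
  set S : ℝ := ∑ s, ‖a s‖ ^ 2 with hS
  set D : ℝ := ∑ s : Fin N, ∑ t ∈ Finset.Ioi s, ‖a s - a t‖ ^ 2 with hD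
  set Q : ℝ := ∑ s : Fin N, ∑ t ∈ Finset.Ioi s, ‖a s + a t‖ ^ 2 with hQ
  set T : ℝ := ∑ s : Fin N, ∑ t ∈ Finset.Ioi s, ‖a s + a t‖ with hT
  have hNpos : (2:ℝ) ≤ (N:ℝ) := by exact_mod_cast hN
  -- off-diagonal sums
  have hA2 : ∑ p ∈ (univ : Finset (Fin N)).offDiag, ‖a p.1 - a p.2‖ ^ 2 = 2 * D := by
    rw [hD]
    exact sum_offDiag_pairs (fun i j => ‖a i - a j‖ ^ 2) (fun i j => by show ‖a i - a j‖ ^ 2 = ‖a j - a i‖ ^ 2; rw [norm_sub_rev])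
  have hB2 : ∑ p ∈ (univ : Finset (Fin N)).offDiag, ‖a p.1 + a p.2‖ ^ 2 = 2 * Q := by
    rw [hQ]
    exact sum_offDiag_pairs (fun i j => ‖a i + a j‖ ^ 2) (fun i j => by show ‖a i + a j‖ ^ 2 = ‖a j + a i‖ ^ 2; rw [add_comm])
  have hB1 : ∑ p ∈ (univ : Finset (Fin N)).offDiag, ‖a p.1 + a p.2‖ = 2 * T := by
    rw [hT]
    exact sum_offDiag_pairs (fun i j => ‖a i + a j‖) (fun i j => by show ‖a i + a j‖ = ‖a j + a i‖; rw [add_comm])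
  -- sum over offDiag of pointwise norms
  have hoff : ∀ g : Fin N → ℝ, ∑ p ∈ (univ : Finset (Fin N)).offDiag, (g p.1 + g p.2)
      = (2 * (N:ℝ) - 2) * ∑ i, g i := by
    intro g
    have hdu : ∑ p ∈ (univ ×ˢ univ : Finset (Fin N × Fin N)), (g p.1 + g p.2)
        = ∑ p ∈ (univ : Finset (Fin N)).diag, (g p.1 + g p.2)
          + ∑ p ∈ (univ : Finset (Fin N)).offDiag, (g p.1 + g p.2) := by
      rw [← Finset.diag_union_offDiag (univ : Finset (Fin N))]
      exact Finset.sum_union (Finset.disjoint_diag_offDiag _)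
    have hprod : ∑ p ∈ (univ ×ˢ univ : Finset (Fin N × Fin N)), (g p.1 + g p.2)
        = 2 * (N:ℝ) * ∑ i, g i := by
      rw [Finset.sum_product]
      have hrow : ∀ i : Fin N, ∑ j : Fin N, (g i + g j) = (N:ℝ) * g i + ∑ j, g j := by
        intro i
        rw [Finset.sum_add_distrib, Finset.sum_const, Finset.card_univ, Fintype.card_fin,
          nsmul_eq_mul]
      rw [Finset.sum_congr rfl (fun i _ => hrow i), Finset.sum_add_distrib,
        Finset.sum_const, Finset.card_univ, Fintype.card_fin, nsmul_eq_mul, ← Finset.mul_sum]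
      ring
    have hdiag : ∑ p ∈ (univ : Finset (Fin N)).diag, (g p.1 + g p.2) = 2 * ∑ i, g i := by
      rw [Finset.sum_diag, Finset.mul_sum]
      refine Finset.sum_congr rfl fun i _ => ?_
      ring
    have := hdu
    rw [hprod, hdiag] at this
    linarith [this]
  -- parallelogram : D + Q = 2 (N-1) S
  have key1 : D + Q = (2 * (N:ℝ) - 2) * S := by
    have h1 : 2 * D + 2 * Q = ∑ p ∈ (univ : Finset (Fin N)).offDiag,
        ((fun i => 2 * ‖a i‖ ^ 2) p.1 + (fun i => 2 * ‖a i‖ ^ 2) p.2) := by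
      rw [← hA2, ← hB2, ← Finset.sum_add_distrib]
      refine Finset.sum_congr rfl fun p _ => ?_
      have := parallelogram_law_with_norm ℂ (a p.1) (a p.2)
      simp only
      nlinarith [this]
    rw [hoff (fun i => 2 * ‖a i‖ ^ 2)] at h1
    have h2 : ∑ i : Fin N, 2 * ‖a i‖ ^ 2 = 2 * S := by
      rw [hS, Finset.mul_sum]
    rw [h2] at h1
    linarith
  -- Cauchy-Schwarz : 2 T^2 ≤ N (N-1) Q
  have key2 : 2 * T ^ 2 ≤ (N:ℝ) * ((N:ℝ) - 1) * Q := by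
    have hcs := sq_sum_le_card_mul_sum_sq
      (s := (univ : Finset (Fin N)).offDiag) (f := fun p => ‖a p.1 + a p.2‖)
    have hcardod : (((univ : Finset (Fin N)).offDiag.card : ℝ)) = (N:ℝ) * ((N:ℝ) - 1) := by
      rw [Finset.offDiag_card]
      simp only [Finset.card_univ, Fintype.card_fin]
      rw [Nat.cast_sub (Nat.le_mul_of_pos_left N (by omega))]
      push_cast
      ring
    rw [hB1, hcardod] at hcs
    have hcs2 : ∑ p ∈ (univ : Finset (Fin N)).offDiag, ‖a p.1 + a p.2‖ ^ 2 = 2 * Q := hB2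
    rw [hcs2] at hcs
    nlinarith [hcs]
  have h2N : (0:ℝ) < 2 * (N:ℝ) - 2 := by linarith
  have hNN : (0:ℝ) < (N:ℝ) * ((N:ℝ) - 1) := by nlinarith
  rw [ge_iff_le]
  have hkey : (2 / ((N:ℝ) * ((N:ℝ) - 1))) * T ^ 2 ≤ Q := by
    rw [div_mul_eq_mul_div, div_le_iff₀ hNN]
    nlinarith [key2]
  have hfin : D + (2 / ((N:ℝ) * ((N:ℝ) - 1))) * T ^ 2 ≤ (2 * (N:ℝ) - 2) * S := by
    rw [← key1]; linarith
  rw [div_mul_eq_mul_div, div_le_iff₀ h2N, one_mul]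
  calc D + (2 / ((N:ℝ) * ((N:ℝ) - 1))) * T ^ 2 ≤ (2 * (N:ℝ) - 2) * S := hfin
    _ = S * (2 * (N:ℝ) - 2) := by ring
end
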